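/- arXiv:2310.04859 — 7 statements merged into one kernel-verified Lean document; each statement's English description precedes it below -/
import Mathlib

section
/- Let f1, f2 : ℕ → ℝ, and let W be a symmetric real N × N matrix such that ∑_k |f1(k)|·‖W‖^k and ∑_k |f2(k)|·‖W‖^k converge (sub-multiplicative matrix norm). Then for every pair of indices i, j: ∑_{v=1}^{N} (∑'_{l} f1(l)·(W^l)_{iv}) · (∑'_{l} f2(l)·(W^l)_{jv}) = (∑'_{k} (f1 * f2)(k) • W^k)_{ij}, where (f1 * f2)(k) := ∑_{p=0}^{k} f1(k−p)·f2(p). -/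
attribute [local instance] Matrix.linftyOpNormedRing
attribute [local instance] Matrix.linftyOpNormedSpace

namespace AuxGRF

variable {N : ℕ}

lemma entry_le_norm (A : Matrix (Fin N) (Fin N) ℝ) (i j : Fin N) : ‖A i j‖ ≤ ‖A‖ := by
  have h : ‖A i j‖₊ ≤ ‖A‖₊ := by
    rw [Matrix.linfty_opNNNorm_def]
    calc ‖A i j‖₊ ≤ ∑ j' : Fin N, ‖A i j'‖₊ :=
          Finset.single_le_sum (f := fun j' => ‖A i j'‖₊) (fun _ _ => zero_le)
            (Finset.mem_univ j)
      _ ≤ _ := Finset.le_sup (f := fun i => ∑ j' : Fin N, ‖A i j'‖₊) (Finset.mem_univ i)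
  exact_mod_cast h

lemma norm_one_le : ‖(1 : Matrix (Fin N) (Fin N) ℝ)‖ ≤ 1 := by
  have h : ‖(1 : Matrix (Fin N) (Fin N) ℝ)‖₊ ≤ 1 := by
    rw [Matrix.linfty_opNNNorm_def]
    apply Finset.sup_le
    intro b _
    simp [Matrix.one_apply, apply_ite (‖·‖₊), Finset.sum_ite_eq]
  exact_mod_cast h

lemma norm_term_le (f : ℕ → ℝ) (W : Matrix (Fin N) (Fin N) ℝ) (k : ℕ) :
    ‖f k • W ^ k‖ ≤ |f k| * ‖W‖ ^ k := by
  rw [norm_smul, Real.norm_eq_abs]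
  gcongr
  cases k with
  | zero => rw [pow_zero, pow_zero]; exact norm_one_le
  | succ n => exact norm_pow_le' W n.succ_pos

/-- The `(i,j)` entry map as a continuous linear map. -/
noncomputable def entryCLM (i j : Fin N) : Matrix (Fin N) (Fin N) ℝ →L[ℝ] ℝ :=
  LinearMap.mkContinuous
    { toFun := fun A => A i j
      map_add' := fun _ _ => rfl
      map_smul' := fun _ _ => rfl } 1
    (fun A => by rw [one_mul]; exact entry_le_norm A i j)

end AuxGRF

/-- Entrywise form of the generating-function identity: for a symmetric matrix `W`,
the sum over intermediate nodes `v` of the products of the two modulation-function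
power series entries equals the `(i,j)` entry of the matrix power series with
convolved coefficients. -/
theorem sum_over_nodes_eq_convolution_series_entry
    {N : ℕ} (f1 f2 : ℕ → ℝ) (W : Matrix (Fin N) (Fin N) ℝ)
    (hsymm : W.IsSymm)
    (h1 : Summable fun k : ℕ => |f1 k| * ‖W‖ ^ k)
    (h2 : Summable fun k : ℕ => |f2 k| * ‖W‖ ^ k)
    (i j : Fin N) :
    ∑ v : Fin N, (∑' l : ℕ, f1 l * (W ^ l) i v) * (∑' l : ℕ, f2 l * (W ^ l) j v)
      = (∑' k : ℕ, (∑ p ∈ Finset.range (k + 1), f1 (k - p) * f2 p) • W ^ k) i j := by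
  haveI : CompleteSpace (Matrix (Fin N) (Fin N) ℝ) := FiniteDimensional.complete ℝ _
  set g1 : ℕ → Matrix (Fin N) (Fin N) ℝ := fun k => f1 k • W ^ k with hg1
  set g2 : ℕ → Matrix (Fin N) (Fin N) ℝ := fun k => f2 k • W ^ k with hg2
  have hn1 : Summable fun k => ‖g1 k‖ :=
    Summable.of_nonneg_of_le (fun _ => norm_nonneg _) (AuxGRF.norm_term_le f1 W) h1
  have hn2 : Summable fun k => ‖g2 k‖ :=
    Summable.of_nonneg_of_le (fun _ => norm_nonneg _) (AuxGRF.norm_term_le f2 W) h2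
  have hs1 : Summable g1 := hn1.of_norm
  have hs2 : Summable g2 := hn2.of_norm
  set A := ∑' l, g1 l with hA
  set B := ∑' l, g2 l with hB
  -- entrywise tsums are entries of the matrix tsums
  have e1 : ∀ v, (∑' l : ℕ, f1 l * (W ^ l) i v) = A i v := by
    intro v
    have := ((AuxGRF.entryCLM i v).map_tsum hs1).symm
    exact this
  have e2 : ∀ v, (∑' l : ℕ, f2 l * (W ^ l) j v) = B v j := by
    intro v
    have hsym : ∀ l : ℕ, (W ^ l) j v = (W ^ l) v j := fun l => (hsymm.pow l).apply v j
    simp_rw [hsym]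
    have := ((AuxGRF.entryCLM v j).map_tsum hs2).symm
    exact this
  have hco : ∀ k, ∑ p ∈ Finset.range (k + 1), g1 p * g2 (k - p)
      = (∑ p ∈ Finset.range (k + 1), f1 (k - p) * f2 p) • W ^ k := by
    intro k
    rw [Finset.sum_smul, ← Finset.sum_range_reflect]
    apply Finset.sum_congr rfl
    intro p hp
    have hpk : p ≤ k := Nat.lt_succ_iff.mp (Finset.mem_range.mp hp)
    simp only [Nat.add_sub_cancel, Nat.sub_sub_self hpk]
    show (f1 (k - p) • W ^ (k - p)) * (f2 p • W ^ p) = (f1 (k - p) * f2 p) • W ^ k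
    rw [smul_mul_smul_comm, ← pow_add, Nat.sub_add_cancel hpk]
  simp_rw [e1, e2]
  rw [show (∑ v, A i v * B v j) = (A * B) i j from Matrix.mul_apply.symm, hA, hB]
  have key := tsum_mul_tsum_eq_tsum_sum_range_of_summable_norm hn1 hn2
  simp_rw [hco] at key
  exact congrArg (fun M : Matrix (Fin N) (Fin N) ℝ => M i j) key
end

section
/- Let α : ℕ → ℝ with α(0) = 1, and let f : ℕ → ℝ be defined recursively by f(0) = 1 and f(i+1) = (α(i+1) − ∑_{p=0}^{i−1} f(i−p)·f(p+1))/2. Then for every i ∈ ℕ, f(i) = ∑_{n=0}^{i} ((∏_{j=0}^{n−1} (1/2 − j))/n!) · c(i, n), where c(i, n) is the coefficient of x^i in the n-th power of the formal power series ∑_{j≥1} α(j)·x^j. Equivalently, f(i) = ∑_{n=0}^{i} binom(1/2, n) ∑_{k1+2k2+3k3+⋯=i, k1+k2+k3+⋯=n} multinomial(n; k1, k2, k3, …) · α(1)^{k1} α(2)^{k2} α(3)^{k3} ⋯. -/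
private lemma descPoch_prod (r : ℝ) (n : ℕ) :
    (descPochhammer ℤ n).smeval r = ∏ j ∈ Finset.range n, (r - (j : ℝ)) := by
  induction n with
  | zero => simp [descPochhammer_zero, Polynomial.smeval_one]
  | succ n ih =>
    rw [descPochhammer_succ_right, Polynomial.smeval_mul, ih, Finset.prod_range_succ]
    congr 1
    simp [Polynomial.smeval_sub, Polynomial.smeval_X, Polynomial.smeval_natCast]

private lemma binom_half (n : ℕ) :
    (∏ j ∈ Finset.range n, ((1 : ℝ) / 2 - (j : ℝ))) / (n.factorial : ℝ) =
      Ring.choose ((1 : ℝ) / 2) n := by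
  have h := Ring.descPochhammer_eq_factorial_smul_choose (R := ℝ) (1/2) n
  rw [descPoch_prod] at h
  have hn : (n.factorial : ℝ) ≠ 0 := Nat.cast_ne_zero.mpr n.factorial_ne_zero
  rw [h, nsmul_eq_mul]
  field_simp

/-- Closed form for the symmetric modulation function: the sequence produced by the
iterative formula equals `∑_{n=0}^{i} binom(1/2, n) * c(i, n)`, where
`binom(1/2, n) = (∏_{j<n} (1/2 - j)) / n!` is the generalised binomial coefficient and
`c(i, n)` is the coefficient of `x^i` in the `n`-th power of the formal power series
`∑_{j≥1} α j • x^j`. -/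
theorem symmetric_modulation_function_closed_form
    (α : ℕ → ℝ) (hα : α 0 = 1) (f : ℕ → ℝ) (hf0 : f 0 = 1)
    (hf : ∀ i : ℕ,
      f (i + 1) = (α (i + 1) - ∑ p ∈ Finset.range i, f (i - p) * f (p + 1)) / 2) :
    ∀ i : ℕ, f i = ∑ n ∈ Finset.range (i + 1),
      ((∏ j ∈ Finset.range n, ((1 : ℝ) / 2 - (j : ℝ))) / (n.factorial : ℝ)) *
        PowerSeries.coeff (R := ℝ) i
          ((PowerSeries.mk fun j : ℕ => if j = 0 then (0 : ℝ) else α j) ^ n) := by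
  set A : PowerSeries ℝ := PowerSeries.mk fun j : ℕ => if j = 0 then (0 : ℝ) else α j with hA
  set b : ℕ → ℝ := fun n => Ring.choose ((1 : ℝ) / 2) n with hb
  set g : ℕ → ℝ := fun i => ∑ n ∈ Finset.range (i + 1), b n * PowerSeries.coeff (R := ℝ) i (A ^ n)
    with hg
  -- coefficients of A^n vanish below n
  have hvan : ∀ k n : ℕ, k < n → PowerSeries.coeff (R := ℝ) k (A ^ n) = 0 := by
    intro k n hkn
    have hXA : PowerSeries.X ∣ A := by
      rw [PowerSeries.X_dvd_iff]
      simp [hA]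
    have : PowerSeries.X ^ n ∣ A ^ n := pow_dvd_pow_of_dvd hXA n
    exact (PowerSeries.X_pow_dvd_iff.mp this) k hkn
  -- g with sum extended to any range containing range (i+1)
  have hg' : ∀ i N : ℕ, i < N →
      g i = ∑ n ∈ Finset.range N, b n * PowerSeries.coeff (R := ℝ) i (A ^ n) := by
    intro i N hiN
    rw [hg]
    refine Finset.sum_subset (Finset.range_subset_range.mpr hiN) ?_
    intro n hn hn'
    simp only [Finset.mem_range, not_lt] at hn'
    rw [hvan i n hn', mul_zero]
  have hg0 : g 0 = 1 := by simp [hg, hb, Ring.choose_zero_right]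
  -- convolution identity
  have hconv : ∀ k : ℕ, ∑ p ∈ Finset.range (k + 1), g (k - p) * g p = α k := by
    intro k
    have step1 : ∑ p ∈ Finset.range (k + 1), g (k - p) * g p =
        ∑ n ∈ Finset.range (k + 1), ∑ m ∈ Finset.range (k + 1),
          b n * b m * PowerSeries.coeff (R := ℝ) k (A ^ (n + m)) := by
      have : ∀ p ∈ Finset.range (k + 1), g (k - p) * g p =
          ∑ n ∈ Finset.range (k + 1), ∑ m ∈ Finset.range (k + 1),
            b n * b m * (PowerSeries.coeff (R := ℝ) (k - p) (A ^ n) *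
              PowerSeries.coeff (R := ℝ) p (A ^ m)) := by
        intro p hp
        rw [Finset.mem_range] at hp
        rw [hg' (k - p) (k + 1) (by omega), hg' p (k + 1) (by omega),
          Finset.sum_mul_sum]
        exact Finset.sum_congr rfl fun n _ => Finset.sum_congr rfl fun m _ => by ring
      rw [Finset.sum_congr rfl this, Finset.sum_comm]
      refine Finset.sum_congr rfl fun n _ => ?_
      rw [Finset.sum_comm]
      refine Finset.sum_congr rfl fun m _ => ?_
      rw [← Finset.mul_sum]
      congr 1
      rw [pow_add, PowerSeries.coeff_mul, Finset.Nat.sum_antidiagonal_eq_sum_range_succ_mk]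
      rw [← Finset.sum_range_reflect]
      refine Finset.sum_congr rfl fun p hp => ?_
      rw [Finset.mem_range] at hp
      rw [show k + 1 - 1 - p = k - p by omega, show k - (k - p) = p by omega]
    -- reindex the double sum along antidiagonals
    have step2 : ∑ n ∈ Finset.range (k + 1), ∑ m ∈ Finset.range (k + 1),
          b n * b m * PowerSeries.coeff (R := ℝ) k (A ^ (n + m)) =
        ∑ N ∈ Finset.range (k + 1), (∑ ij ∈ Finset.HasAntidiagonal.antidiagonal N, b ij.1 * b ij.2) *
          PowerSeries.coeff (R := ℝ) k (A ^ N) := by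
      rw [← Finset.sum_product']
      have hT : ((Finset.range (k + 1)).biUnion fun N =>
          Finset.HasAntidiagonal.antidiagonal N) ⊆ Finset.range (k + 1) ×ˢ Finset.range (k + 1) := by
        intro ij hij
        simp only [Finset.mem_biUnion, Finset.mem_range, Finset.HasAntidiagonal.mem_antidiagonal] at hij
        obtain ⟨N, hN, hsum⟩ := hij
        simp only [Finset.mem_product, Finset.mem_range]
        omega
      rw [← Finset.sum_subset hT ?_]
      · rw [Finset.sum_biUnion ?_]
        · refine Finset.sum_congr rfl fun N _ => ?_
          rw [Finset.sum_mul]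
          refine Finset.sum_congr rfl fun ij hij => ?_
          rw [Finset.HasAntidiagonal.mem_antidiagonal] at hij
          rw [hij]
        · intro N₁ _ N₂ _ hne
          simp only [Finset.disjoint_left]
          intro ij h1 h2
          rw [Finset.HasAntidiagonal.mem_antidiagonal] at h1 h2
          exact hne (h1 ▸ h2)
      · intro ij _ hij
        simp only [Finset.mem_biUnion, Finset.mem_range, Finset.HasAntidiagonal.mem_antidiagonal,
          not_exists, not_and] at hij
        have : k < ij.1 + ij.2 := by
          by_contra h
          exact hij (ij.1 + ij.2) (by omega) rfl
        rw [hvan k _ this, mul_zero]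
    -- Vandermonde: inner sums are `Nat.choose 1 N`
    have step3 : ∀ N : ℕ, ∑ ij ∈ Finset.HasAntidiagonal.antidiagonal N, b ij.1 * b ij.2 =
        ((Nat.choose 1 N : ℕ) : ℝ) := by
      intro N
      rw [hb, ← Ring.add_choose_eq N (Commute.all _ _)]
      norm_num
      rw [show ((1 : ℝ)) = ((1 : ℕ) : ℝ) by norm_num, Ring.choose_natCast]
    rw [step1, step2]
    simp only [step3]
    -- evaluate: only N = 0 (k = 0) or N = 1 contributes
    rcases Nat.eq_zero_or_pos k with rfl | hk
    · simp [hα]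
    · rw [Finset.sum_eq_single_of_mem 1 (by rw [Finset.mem_range]; omega) ?_]
      · simp [pow_one, hA, PowerSeries.coeff_mk, Nat.pos_iff_ne_zero.mp hk]
      · intro N _ hN1
        rcases Nat.eq_zero_or_pos N with rfl | hN
        · simp [PowerSeries.coeff_one, Nat.pos_iff_ne_zero.mp hk]
        · have : Nat.choose 1 N = 0 := Nat.choose_eq_zero_of_lt (by omega)
          rw [this]
          simp
  -- now strong induction
  have key : ∀ i : ℕ, f i = g i := by
    intro i
    induction i using Nat.strong_induction_on with
    | _ i ih =>
      match i with
      | 0 => rw [hf0, hg0]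
      | (j + 1) =>
        rw [hf j]
        have hc := hconv (j + 1)
        rw [Finset.sum_range_succ'] at hc
        simp only [Nat.succ_sub_succ, Nat.sub_zero, hg0, mul_one] at hc
        rw [Finset.sum_range_succ, Nat.sub_self, hg0, one_mul] at hc
        have hgj : g (j + 1) =
            (α (j + 1) - ∑ p ∈ Finset.range j, g (j - p) * g (p + 1)) / 2 := by
          rw [← hc]; ring
        rw [hgj]
        congr 2
        refine Finset.sum_congr rfl fun p hp => ?_
        rw [Finset.mem_range] at hp
        rw [ih (j - p) (by omega), ih (p + 1) (by omega)]
  intro i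
  rw [key i, hg]
  refine Finset.sum_congr rfl fun n _ => ?_
  rw [binom_half, hb]
end

section
/- Let d ≥ 2 and k be natural numbers. Then ∑_{p=0}^{k} [(d−2+2p)‼ / ((2p)‼ · (d−2)‼)] · [(d−2+2(k−p))‼ / ((2(k−p))‼ · (d−2)‼)] = binom(d+k−1, k), where n‼ denotes the double factorial and the equality is between rational (or real) numbers. -/
open Finset

namespace RLMSC

noncomputable def f (e i : ℕ) : ℝ :=
  ((e + 2 * i).doubleFactorial : ℝ) /
    (((2 * i).doubleFactorial : ℝ) * (e.doubleFactorial : ℝ))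

lemma df_ne (n : ℕ) : (n.doubleFactorial : ℝ) ≠ 0 := by
  exact_mod_cast (Nat.doubleFactorial_pos n).ne'

lemma f_zero (e : ℕ) : f e 0 = 1 := by
  simp [f]
  exact (Nat.doubleFactorial_pos e).ne'

lemma f_rec (e i : ℕ) :
    (2 * (i : ℝ) + 2) * f e (i + 1) = ((e : ℝ) + 2 * i + 2) * f e i := by
  have h1 : e + 2 * (i + 1) = (e + 2 * i) + 2 := by ring
  have h2 : 2 * (i + 1) = (2 * i) + 2 := by ring
  rw [f, f, h1, h2, Nat.doubleFactorial_add_two, Nat.doubleFactorial_add_two]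
  push_cast
  field_simp

noncomputable def c (e k : ℕ) : ℝ := ∑ p ∈ Finset.range (k + 1), f e p * f e (k - p)

lemma sym (e n : ℕ) :
    (n : ℝ) * c e n = 2 * ∑ p ∈ Finset.range (n + 1), (p : ℝ) * (f e p * f e (n - p)) := by
  have hrefl : ∑ p ∈ Finset.range (n + 1), ((n - p : ℕ) : ℝ) * (f e p * f e (n - p))
      = ∑ p ∈ Finset.range (n + 1), (p : ℝ) * (f e p * f e (n - p)) := by
    rw [← Finset.sum_range_reflect (fun j => ((j : ℕ) : ℝ) * (f e j * f e (n - j))) (n + 1)]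
    apply Finset.sum_congr rfl
    intro p hp
    have hp' : p ≤ n := Nat.lt_succ_iff.mp (Finset.mem_range.mp hp)
    have h1 : n + 1 - 1 - p = n - p := by omega
    have h2 : n - (n - p) = p := by omega
    rw [h1, h2]
    ring
  have expand : (n : ℝ) * c e n
      = ∑ p ∈ Finset.range (n + 1), (p : ℝ) * (f e p * f e (n - p))
        + ∑ p ∈ Finset.range (n + 1), ((n - p : ℕ) : ℝ) * (f e p * f e (n - p)) := by
    rw [c, Finset.mul_sum, ← Finset.sum_add_distrib]
    apply Finset.sum_congr rfl
    intro p hp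
    have hp' : p ≤ n := Nat.lt_succ_iff.mp (Finset.mem_range.mp hp)
    rw [Nat.cast_sub hp']
    ring
  rw [expand, hrefl]; ring

lemma c_rec (e k : ℕ) : ((k : ℝ) + 1) * c e (k + 1) = ((e : ℝ) + k + 2) * c e k := by
  have h1 := sym e (k + 1)
  push_cast at h1
  rw [h1]
  rw [Finset.sum_range_succ' (fun p => (p : ℝ) * (f e p * f e (k + 1 - p))) (k + 1)]
  simp only [Nat.cast_zero, zero_mul, add_zero]
  have shift : ∀ p ∈ Finset.range (k + 1),
      (2 : ℝ) * (((p + 1 : ℕ) : ℝ) * (f e (p + 1) * f e (k + 1 - (p + 1))))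
        = ((e : ℝ) + 2 * p + 2) * (f e p * f e (k - p)) := by
    intro p hp
    have hkp : k + 1 - (p + 1) = k - p := by omega
    rw [hkp]
    have hr := f_rec e p
    push_cast
    linear_combination (f e (k - p)) * hr
  rw [Finset.mul_sum, Finset.sum_congr rfl shift]
  have split : ∑ p ∈ Finset.range (k + 1), ((e : ℝ) + 2 * p + 2) * (f e p * f e (k - p))
      = ((e : ℝ) + 2) * c e k + 2 * ∑ p ∈ Finset.range (k + 1), (p : ℝ) * (f e p * f e (k - p)) := by
    rw [c, Finset.mul_sum, Finset.mul_sum, ← Finset.sum_add_distrib]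
    apply Finset.sum_congr rfl
    intro p hp; ring
  rw [split, ← sym e k]
  ring

lemma c_eq (e k : ℕ) : c e k = ((e + k + 1).choose k : ℝ) := by
  induction k with
  | zero => simp [c, f_zero]
  | succ k ih =>
    have hk : ((k : ℝ) + 1) ≠ 0 := by positivity
    have h := c_rec e k
    rw [ih] at h
    have hnat := Nat.add_one_mul_choose_eq (e + k + 1) k
    rw [show e + k + 1 + 1 = e + k + 2 from by omega] at hnat
    have hc : ((e : ℝ) + k + 2) * ((e + k + 1).choose k : ℝ)
        = ((e + k + 2).choose (k + 1) : ℝ) * ((k : ℝ) + 1) := by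
      exact_mod_cast hnat
    rw [show e + (k + 1) + 1 = e + k + 2 from by omega]
    have key : ((k : ℝ) + 1) * c e (k + 1)
        = ((k : ℝ) + 1) * ((e + k + 2).choose (k + 1) : ℝ) := by
      rw [h]; linarith [hc]
    exact mul_left_cancel₀ hk key

end RLMSC

/-- The discrete self-convolution of `i ↦ (d-2+2i)‼ / ((2i)‼ (d-2)‼)` equals the
`d`-regularised Laplacian kernel coefficients `k ↦ binom(d+k-1, k)`. -/
theorem regularised_laplacian_modulation_self_convolution (d k : ℕ) (hd : 2 ≤ d) :
    ∑ p ∈ Finset.range (k + 1),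
        (((d - 2 + 2 * p).doubleFactorial : ℝ) /
            (((2 * p).doubleFactorial : ℝ) * ((d - 2).doubleFactorial : ℝ))) *
          (((d - 2 + 2 * (k - p)).doubleFactorial : ℝ) /
            (((2 * (k - p)).doubleFactorial : ℝ) * ((d - 2).doubleFactorial : ℝ)))
      = ((d + k - 1).choose k : ℝ) := by
  obtain ⟨e, rfl⟩ := Nat.exists_eq_add_of_le hd
  have h1 : 2 + e - 2 = e := by omega
  have h2 : 2 + e + k - 1 = e + k + 1 := by omega
  rw [h1, h2, ← RLMSC.c_eq e k]
  rfl
end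

section
/- Let W be a symmetric real N × N matrix all of whose eigenvalues have absolute value at most r ≥ 0, and let α : ℕ → ℝ satisfy α(0) = 1, with ∑_{k≥1} |α(k)|·r^k convergent and ∑_{k≥1} |α(k)|·r^k ≤ 1. Then the matrix series K_α(W) := ∑'_{k≥0} α(k) • W^k converges and is positive semidefinite. -/
set_option maxHeartbeats 1000000 in
private lemma scalar_aux (α : ℕ → ℝ) (hα0 : α 0 = 1) (r x : ℝ) (hx : |x| ≤ r)
    (hsum : Summable fun k : ℕ => |α (k + 1)| * r ^ (k + 1))
    (hle : (∑' k : ℕ, |α (k + 1)| * r ^ (k + 1)) ≤ 1) :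
    Summable (fun k : ℕ => α k * x ^ k) ∧ 0 ≤ ∑' k : ℕ, α k * x ^ k := by
  have habs : Summable fun k : ℕ => |α k| * r ^ k := (summable_nat_add_iff 1).mp hsum
  have hb : ∀ k : ℕ, |α k * x ^ k| ≤ |α k| * r ^ k := fun k => by
    rw [abs_mul, abs_pow]
    exact mul_le_mul_of_nonneg_left (pow_le_pow_left₀ (abs_nonneg _) hx k) (abs_nonneg _)
  have hs : Summable (fun k : ℕ => α k * x ^ k) :=
    Summable.of_abs (habs.of_nonneg_of_le (fun k => abs_nonneg _) hb)
  refine ⟨hs, ?_⟩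
  have hsum_tail : Summable fun k : ℕ => α (k + 1) * x ^ (k + 1) :=
    (summable_nat_add_iff 1).mpr hs
  have habs2 : |∑' k : ℕ, α (k + 1) * x ^ (k + 1)| ≤ ∑' k : ℕ, |α (k + 1) * x ^ (k + 1)| := by
    rw [abs_le]
    constructor
    · rw [← tsum_neg]
      exact Summable.tsum_le_tsum (fun k => neg_abs_le _) hsum_tail.abs.neg hsum_tail
    · exact Summable.tsum_le_tsum (fun k => le_abs_self _) hsum_tail hsum_tail.abs
  have h1 : |∑' k : ℕ, α (k + 1) * x ^ (k + 1)| ≤ 1 := by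
    calc |∑' k : ℕ, α (k + 1) * x ^ (k + 1)| ≤ ∑' k : ℕ, |α (k + 1) * x ^ (k + 1)| := habs2
      _ ≤ ∑' k : ℕ, |α (k + 1)| * r ^ (k + 1) :=
          Summable.tsum_le_tsum (fun k => hb (k + 1)) hsum_tail.abs hsum
      _ ≤ 1 := hle
  rw [Summable.tsum_eq_zero_add hs, hα0]
  have h2 := (abs_le.mp h1).1
  simp only [pow_zero, mul_one]
  linarith

set_option maxHeartbeats 1000000 in
private lemma kernel_aux {N : ℕ} (W U : Matrix (Fin N) (Fin N) ℝ)
    (hUU : U * star U = 1) (hUU' : star U * U = 1)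
    (lam : Fin N → ℝ) (hW' : W = U * Matrix.diagonal lam * star U)
    (r : ℝ) (hr : 0 ≤ r) (heig : ∀ i : Fin N, |lam i| ≤ r)
    (α : ℕ → ℝ) (hα0 : α 0 = 1)
    (hsum : Summable fun k : ℕ => |α (k + 1)| * r ^ (k + 1))
    (hle : (∑' k : ℕ, |α (k + 1)| * r ^ (k + 1)) ≤ 1) :
    Summable (fun k : ℕ => α k • W ^ k) ∧ (∑' k : ℕ, α k • W ^ k).PosSemidef := by
  have hpow : ∀ k : ℕ, W ^ k = U * Matrix.diagonal (fun i => lam i ^ k) * star U := by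
    intro k
    induction k with
    | zero => simp [hUU]
    | succ k ih =>
        rw [pow_succ, ih, hW']
        calc U * Matrix.diagonal (fun i => lam i ^ k) * star U *
              (U * Matrix.diagonal lam * star U)
            = U * (Matrix.diagonal (fun i => lam i ^ k) * (star U * U) * Matrix.diagonal lam)
              * star U := by noncomm_ring
          _ = U * Matrix.diagonal (fun i => lam i ^ (k + 1)) * star U := by
              rw [hUU', mul_one, Matrix.diagonal_mul_diagonal]
              simp [pow_succ]
  have hgsum : Summable (fun k : ℕ => fun i : Fin N => α k * lam i ^ k) := by
    rw [Pi.summable]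
    exact fun i => (scalar_aux α hα0 r (lam i) (heig i) hsum hle).1
  have hDsum : Summable fun k : ℕ => Matrix.diagonal (fun i : Fin N => α k * lam i ^ k) :=
    hgsum.matrix_diagonal
  have hfun : (fun k : ℕ => α k • W ^ k)
      = fun k : ℕ => U * Matrix.diagonal (fun i : Fin N => α k * lam i ^ k) * star U := by
    funext k
    have hdg : Matrix.diagonal (fun i : Fin N => α k * lam i ^ k)
        = α k • Matrix.diagonal (fun i => lam i ^ k) := by
      rw [← Matrix.diagonal_smul]
      rfl
    rw [hpow k, hdg, mul_smul_comm, smul_mul_assoc]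
  have hSummable : Summable (fun k : ℕ => α k • W ^ k) := by
    rw [hfun]
    exact (hDsum.mul_left U).mul_right (star U)
  refine ⟨hSummable, ?_⟩
  have htsum : (∑' k : ℕ, α k • W ^ k)
      = U * Matrix.diagonal (∑' k : ℕ, fun i : Fin N => α k * lam i ^ k) * star U := by
    rw [hfun]
    calc ∑' k : ℕ, U * Matrix.diagonal (fun i : Fin N => α k * lam i ^ k) * star U
        = (∑' k : ℕ, U * Matrix.diagonal (fun i : Fin N => α k * lam i ^ k)) * star U :=
          (hDsum.mul_left U).tsum_mul_right (star U)
      _ = U * (∑' k : ℕ, Matrix.diagonal (fun i : Fin N => α k * lam i ^ k)) * star U := by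
          rw [hDsum.tsum_mul_left U]
      _ = U * Matrix.diagonal (∑' k : ℕ, fun i : Fin N => α k * lam i ^ k) * star U := by
          rw [Matrix.diagonal_tsum]
  rw [htsum]
  have hdiag : (Matrix.diagonal (∑' k : ℕ, fun i : Fin N => α k * lam i ^ k)).PosSemidef := by
    rw [Matrix.posSemidef_diagonal_iff]
    intro i
    have hti : (∑' k : ℕ, fun i : Fin N => α k * lam i ^ k) i = ∑' k : ℕ, α k * lam i ^ k :=
      (Pi.hasSum.mp hgsum.hasSum i).tsum_eq.symm
    rw [hti]
    exact (scalar_aux α hα0 r (lam i) (heig i) hsum hle).2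
  have := hdiag.mul_mul_conjTranspose_same U
  simpa [Matrix.star_eq_conjTranspose] using this

/-- If `W` is a symmetric real matrix with spectral radius at most `r`, `α 0 = 1`, and
`∑_{k≥1} |α k| r^k` converges with value at most `1`, then the matrix power series
`K_α(W) = ∑_k α k • W^k` converges and is positive semidefinite. -/
theorem kernel_matrix_posSemidef_of_small_spectral_radius
    {N : ℕ} (W : Matrix (Fin N) (Fin N) ℝ) (hW : W.IsHermitian)
    (r : ℝ) (hr : 0 ≤ r) (heig : ∀ i : Fin N, |hW.eigenvalues i| ≤ r)
    (α : ℕ → ℝ) (hα0 : α 0 = 1)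
    (hsum : Summable fun k : ℕ => |α (k + 1)| * r ^ (k + 1))
    (hle : (∑' k : ℕ, |α (k + 1)| * r ^ (k + 1)) ≤ 1) :
    Summable (fun k : ℕ => α k • W ^ k) ∧ (∑' k : ℕ, α k • W ^ k).PosSemidef := by
  refine kernel_aux W (hW.eigenvectorUnitary : Matrix (Fin N) (Fin N) ℝ)
    (Matrix.mem_unitaryGroup_iff.mp hW.eigenvectorUnitary.2)
    (Matrix.mem_unitaryGroup_iff'.mp hW.eigenvectorUnitary.2)
    hW.eigenvalues ?_ r hr heig α hα0 hsum hle
  have := hW.spectral_theorem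
  simpa using this
end

section
/- Let W be a symmetric real N × N matrix all of whose eigenvalues have absolute value at most r ≥ 0, let σ ∈ ℝ^N with |σ(i)| = 1 for every i, and let α, A : ℕ → ℝ satisfy |α(k)| ≤ A(k) for all k, with ∑_k A(k)·r^k convergent. Then the matrix series K_α(W) := ∑'_{k} α(k) • W^k converges and σᵀ K_α(W) σ ≤ N · ∑'_{k} A(k)·r^k. Consequently, the empirical Rademacher complexity bound (1/N)·√(σᵀ K_α(W) σ) ≤ √((1/N)·∑_k A(k)·r^k) holds for every such sign vector σ and admissible coefficient sequence α. -/
open Matrix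

/-- Core estimate of the empirical Rademacher complexity bound: if the eigenvalues of the
symmetric matrix `W` are bounded in absolute value by `r`, `σ` is a sign vector, and
`|α k| ≤ A k` with `∑ A k * r^k` convergent, then `K_α(W) = ∑' k, α k • W^k` converges,
`σᵀ K_α(W) σ ≤ N * ∑' k, A k * r^k`, and hence
`(1/N) √(σᵀ K_α(W) σ) ≤ √((1/N) ∑' k, A k * r^k)`. -/
theorem rademacher_complexity_core_bound
    {N : ℕ} (W : Matrix (Fin N) (Fin N) ℝ) (hW : W.IsHermitian)
    (r : ℝ) (hr : 0 ≤ r) (heig : ∀ i : Fin N, |hW.eigenvalues i| ≤ r)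
    (σ : Fin N → ℝ) (hσ : ∀ i, |σ i| = 1)
    (α A : ℕ → ℝ) (hαA : ∀ k, |α k| ≤ A k)
    (hsum : Summable fun k : ℕ => A k * r ^ k) :
    Summable (fun k : ℕ => α k • W ^ k) ∧
      σ ⬝ᵥ ((∑' k : ℕ, α k • W ^ k) *ᵥ σ) ≤ (N : ℝ) * ∑' k : ℕ, A k * r ^ k ∧
      (1 / (N : ℝ)) * Real.sqrt (σ ⬝ᵥ ((∑' k : ℕ, α k • W ^ k) *ᵥ σ))
        ≤ Real.sqrt ((1 / (N : ℝ)) * ∑' k : ℕ, A k * r ^ k) := by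
  classical
  set U : Matrix (Fin N) (Fin N) ℝ := (hW.eigenvectorUnitary : Matrix (Fin N) (Fin N) ℝ) with hUdef
  set lam := hW.eigenvalues with hlam
  have hU1 : star U * U = 1 := Unitary.coe_star_mul_self hW.eigenvectorUnitary
  have hU2 : U * star U = 1 := Unitary.coe_mul_star_self hW.eigenvectorUnitary
  have hstarU : star U = Uᵀ := by
    ext i j; simp [Matrix.star_apply]
  have hspec : W = U * Matrix.diagonal lam * star U := by
    simpa using hW.spectral_theorem
  have hA0 : ∀ k, 0 ≤ A k := fun k => (abs_nonneg _).trans (hαA k)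
  -- powers
  have hpow : ∀ k : ℕ, W ^ k = U * Matrix.diagonal (fun i => lam i ^ k) * star U := by
    intro k
    induction k with
    | zero => simp [Matrix.diagonal_one, hU2]
    | succ k ih =>
      rw [pow_succ, ih, hspec]
      simp only [mul_assoc]
      rw [← mul_assoc (star U) U, hU1, one_mul,
          ← mul_assoc (Matrix.diagonal fun i => lam i ^ k), Matrix.diagonal_mul_diagonal]
      simp [pow_succ]
  -- the transformed sign vector
  set y : Fin N → ℝ := Uᵀ *ᵥ σ with hy
  have hq : ∀ k : ℕ, σ ⬝ᵥ (W ^ k *ᵥ σ) = ∑ i, lam i ^ k * (y i * y i) := by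
    intro k
    rw [hpow k, hstarU, ← Matrix.mulVec_mulVec, ← Matrix.mulVec_mulVec,
      Matrix.dotProduct_mulVec, ← Matrix.mulVec_transpose]
    simp only [← hy, dotProduct, Matrix.mulVec_diagonal]
    exact Finset.sum_congr rfl fun i _ => by ring
  have hyy : ∑ i, y i * y i = (N : ℝ) := by
    have h1 : y ⬝ᵥ y = σ ⬝ᵥ σ := by
      calc y ⬝ᵥ y = (σ ᵥ* U) ⬝ᵥ y := by rw [hy, Matrix.mulVec_transpose]
        _ = σ ⬝ᵥ (U *ᵥ y) := (Matrix.dotProduct_mulVec σ U y).symm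
        _ = σ ⬝ᵥ ((U * Uᵀ) *ᵥ σ) := by rw [hy, Matrix.mulVec_mulVec]
        _ = σ ⬝ᵥ σ := by rw [← hstarU, hU2, Matrix.one_mulVec]
    have h2 : σ ⬝ᵥ σ = (N : ℝ) := by
      simp only [dotProduct]
      rw [Finset.sum_congr rfl fun i _ => by
        rw [← abs_mul_abs_self (σ i), hσ i, one_mul]]
      simp
    simpa [dotProduct] using h1.trans h2
  have hqb : ∀ k : ℕ, |σ ⬝ᵥ (W ^ k *ᵥ σ)| ≤ (N : ℝ) * r ^ k := by
    intro k
    rw [hq k]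
    calc |∑ i, lam i ^ k * (y i * y i)| ≤ ∑ i, |lam i ^ k * (y i * y i)| :=
          Finset.abs_sum_le_sum_abs _ _
      _ ≤ ∑ i, r ^ k * (y i * y i) := by
          refine Finset.sum_le_sum fun i _ => ?_
          rw [abs_mul, abs_of_nonneg (mul_self_nonneg (y i)), abs_pow]
          exact mul_le_mul_of_nonneg_right
            (pow_le_pow_left₀ (abs_nonneg _) (heig i) k) (mul_self_nonneg _)
      _ = (N : ℝ) * r ^ k := by rw [← Finset.mul_sum, hyy, mul_comm]
  -- entrywise bound for powers
  have hUe : ∀ i j : Fin N, |U i j| ≤ 1 := by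
    intro i j
    have h := congrFun (congrFun hU2 i) i
    have h' : ∑ l, U i l * U i l = 1 := by
      simpa [Matrix.mul_apply, Matrix.star_apply] using h
    have hle : U i j * U i j ≤ 1 := by
      rw [← h']
      exact Finset.single_le_sum (fun l _ => mul_self_nonneg (U i l)) (Finset.mem_univ j)
    exact abs_le_one_iff_mul_self_le_one.2 hle
  have hent : ∀ (k : ℕ) (i j : Fin N), |(W ^ k) i j| ≤ (N : ℝ) * r ^ k := by
    intro k i j
    rw [hpow k]
    have hexp : (U * Matrix.diagonal (fun i => lam i ^ k) * star U) i j
        = ∑ l, U i l * lam l ^ k * U j l := by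
      simp [Matrix.mul_apply, Matrix.diagonal, Matrix.star_apply, Finset.sum_mul, mul_comm]
    rw [hexp]
    calc |∑ l, U i l * lam l ^ k * U j l| ≤ ∑ l, |U i l * lam l ^ k * U j l| :=
          Finset.abs_sum_le_sum_abs _ _
      _ ≤ ∑ _l : Fin N, r ^ k := by
          refine Finset.sum_le_sum fun l _ => ?_
          rw [abs_mul, abs_mul, abs_pow]
          calc |U i l| * |lam l| ^ k * |U j l| ≤ 1 * r ^ k * 1 := by
                refine mul_le_mul (mul_le_mul (hUe i l)
                  (pow_le_pow_left₀ (abs_nonneg _) (heig l) k)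
                  (by positivity) zero_le_one) (hUe j l) (abs_nonneg _) (by positivity)
            _ = r ^ k := by ring
      _ = (N : ℝ) * r ^ k := by simp [mul_comm]
  -- summability of the matrix series
  have hsumN : Summable fun k : ℕ => (N : ℝ) * (A k * r ^ k) := hsum.mul_left _
  have hsummat : Summable (fun k : ℕ => α k • W ^ k) := by
    rw [show (Summable fun k : ℕ => α k • W ^ k) ↔ Summable (fun k : ℕ => fun i j => (α k • W ^ k) i j) from Iff.rfl, Pi.summable]; intro i; rw [Pi.summable]; intro j
    refine Summable.of_abs (hsumN.of_nonneg_of_le (fun k => abs_nonneg _) fun k => ?_)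
    have : (α k • W ^ k) i j = α k * (W ^ k) i j := rfl
    rw [this, abs_mul]
    calc |α k| * |(W ^ k) i j| ≤ A k * ((N : ℝ) * r ^ k) :=
          mul_le_mul (hαA k) (hent k i j) (abs_nonneg _) (hA0 k)
      _ = (N : ℝ) * (A k * r ^ k) := by ring
  -- interchange of sum and quadratic form
  have hT0 : 0 ≤ ∑' k : ℕ, A k * r ^ k :=
    tsum_nonneg fun k => mul_nonneg (hA0 k) (pow_nonneg hr k)
  set L : Matrix (Fin N) (Fin N) ℝ →ₗ[ℝ] ℝ :=
    { toFun := fun M => σ ⬝ᵥ (M *ᵥ σ)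
      map_add' := fun M M' => by simp [Matrix.add_mulVec, dotProduct_add]
      map_smul' := fun a M => by
        simp [Matrix.smul_mulVec, dotProduct_smul] } with hL
  have hLc : L (∑' k : ℕ, α k • W ^ k) = ∑' k : ℕ, L (α k • W ^ k) :=
    (hsummat.hasSum.mapL L.toContinuousLinearMap).tsum_eq.symm
  have hLval : ∀ k : ℕ, L (α k • W ^ k) = α k * (σ ⬝ᵥ (W ^ k *ᵥ σ)) := fun k => by
    simp [hL, Matrix.smul_mulVec, dotProduct_smul]
  have hs2 : Summable fun k : ℕ => α k * (σ ⬝ᵥ (W ^ k *ᵥ σ)) := by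
    refine Summable.of_abs (hsumN.of_nonneg_of_le (fun k => abs_nonneg _) fun k => ?_)
    rw [abs_mul]
    calc |α k| * |σ ⬝ᵥ (W ^ k *ᵥ σ)| ≤ A k * ((N : ℝ) * r ^ k) :=
          mul_le_mul (hαA k) (hqb k) (abs_nonneg _) (hA0 k)
      _ = (N : ℝ) * (A k * r ^ k) := by ring
  have hKey : σ ⬝ᵥ ((∑' k : ℕ, α k • W ^ k) *ᵥ σ)
      = ∑' k : ℕ, α k * (σ ⬝ᵥ (W ^ k *ᵥ σ)) := by
    have : σ ⬝ᵥ ((∑' k : ℕ, α k • W ^ k) *ᵥ σ) = L (∑' k : ℕ, α k • W ^ k) := rfl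
    rw [this, hLc]
    exact tsum_congr hLval
  have hmain : σ ⬝ᵥ ((∑' k : ℕ, α k • W ^ k) *ᵥ σ) ≤ (N : ℝ) * ∑' k : ℕ, A k * r ^ k := by
    rw [hKey, ← tsum_mul_left]
    refine Summable.tsum_le_tsum (fun k => ?_) hs2 hsumN
    calc α k * (σ ⬝ᵥ (W ^ k *ᵥ σ)) ≤ |α k * (σ ⬝ᵥ (W ^ k *ᵥ σ))| := le_abs_self _
      _ ≤ (N : ℝ) * (A k * r ^ k) := by
          rw [abs_mul]
          calc |α k| * |σ ⬝ᵥ (W ^ k *ᵥ σ)| ≤ A k * ((N : ℝ) * r ^ k) :=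
                mul_le_mul (hαA k) (hqb k) (abs_nonneg _) (hA0 k)
            _ = (N : ℝ) * (A k * r ^ k) := by ring
  refine ⟨hsummat, hmain, ?_⟩
  -- final square-root inequality
  set S := σ ⬝ᵥ ((∑' k : ℕ, α k • W ^ k) *ᵥ σ) with hS
  set T := ∑' k : ℕ, A k * r ^ k with hT
  by_cases hSpos : 0 ≤ S
  · have h1 : (1 / (N : ℝ)) * Real.sqrt S = Real.sqrt ((1 / (N : ℝ) ^ 2) * S) := by
      rw [Real.sqrt_mul (by positivity)]
      congr 1
      rw [one_div ((N : ℝ) ^ 2), Real.sqrt_inv, Real.sqrt_sq (Nat.cast_nonneg N), one_div]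
    rw [h1]
    apply Real.sqrt_le_sqrt
    have h2 : (1 / (N : ℝ) ^ 2) * S ≤ (1 / (N : ℝ) ^ 2) * ((N : ℝ) * T) :=
      mul_le_mul_of_nonneg_left hmain (by positivity)
    refine h2.trans_eq ?_
    rcases eq_or_ne (N : ℝ) 0 with h | h
    · simp [h]
    · field_simp
  · push_neg at hSpos
    rw [Real.sqrt_eq_zero'.mpr hSpos.le, mul_zero]
    exact Real.sqrt_nonneg _
end

section
/- Let W be a symmetric real N × N matrix all of whose eigenvalues have absolute value at most 1, let σ > 0 be a real number, and let d ≥ 1 be a natural number. Then the matrix M := I + σ²·(I − W) is invertible and M^{−d} = (1 + σ²)^{−d} · ∑'_{k} binom(d+k−1, k)·(σ²/(1+σ²))^k • W^k, where the series on the right converges absolutely. -/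
attribute [local instance] Matrix.linftyOpNormedRing

attribute [local instance] Matrix.linftyOpNormedAlgebra

attribute [local instance] Matrix.linftyOpNormedSpace

/-- Taylor expansion of the `d`-regularised Laplacian kernel: for a symmetric `W` with
spectrum in `[-1, 1]` and `σ > 0`, the matrix `M = I + σ² (I - W)` is invertible and
`M⁻ᵈ = (1+σ²)⁻ᵈ ∑'_k binom(d+k-1, k) (σ²/(1+σ²))^k • W^k`, the series converging
absolutely. -/
theorem regularised_laplacian_kernel_taylor_expansion
    {N : ℕ} (W : Matrix (Fin N) (Fin N) ℝ) (hW : W.IsHermitian)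
    (heig : ∀ i : Fin N, |hW.eigenvalues i| ≤ 1)
    (σ : ℝ) (hσ : 0 < σ) (d : ℕ) (hd : 1 ≤ d) :
    IsUnit ((1 : Matrix (Fin N) (Fin N) ℝ) + σ ^ 2 • ((1 : Matrix (Fin N) (Fin N) ℝ) - W)) ∧
      Summable (fun k : ℕ =>
        ‖(((d + k - 1).choose k : ℝ) * (σ ^ 2 / (1 + σ ^ 2)) ^ k) • W ^ k‖) ∧
      (((1 : Matrix (Fin N) (Fin N) ℝ) + σ ^ 2 • ((1 : Matrix (Fin N) (Fin N) ℝ) - W))⁻¹) ^ d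
        = (((1 + σ ^ 2) ^ d)⁻¹ : ℝ) •
            ∑' k : ℕ, (((d + k - 1).choose k : ℝ) * (σ ^ 2 / (1 + σ ^ 2)) ^ k) • W ^ k := by
  classical
  have hs2 : (0:ℝ) < 1 + σ ^ 2 := by positivity
  set t : ℝ := σ ^ 2 / (1 + σ ^ 2) with ht
  have ht0 : 0 ≤ t := by positivity
  have ht1 : t < 1 := by rw [ht, div_lt_one hs2]; linarith
  set U : Matrix (Fin N) (Fin N) ℝ := (hW.eigenvectorUnitary : Matrix (Fin N) (Fin N) ℝ) with hUdef
  have hU1 : U * star U = 1 := Matrix.mem_unitaryGroup_iff.mp hW.eigenvectorUnitary.2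
  have hU2 : star U * U = 1 := Matrix.mem_unitaryGroup_iff'.mp hW.eigenvectorUnitary.2
  set lam : Fin N → ℝ := hW.eigenvalues with hlam
  -- the conjugation map
  let hL : (Fin N → ℝ) →ₗ[ℝ] Matrix (Fin N) (Fin N) ℝ :=
    { toFun := fun v => U * Matrix.diagonal v * star U
      map_add' := fun v w => by
        rw [show v + w = fun i => v i + w i from rfl, ← Matrix.diagonal_add, mul_add, add_mul]
      map_smul' := fun c v => by
        rw [Matrix.diagonal_smul, Matrix.mul_smul, Matrix.smul_mul]
        rfl }
  have hLapp : ∀ v, hL v = U * Matrix.diagonal v * star U := fun v => rfl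
  have hL1 : hL 1 = 1 := by
    rw [hLapp, show (1 : Fin N → ℝ) = fun _ => (1:ℝ) from rfl, Matrix.diagonal_one,
      Matrix.mul_one, hU1]
  have hmul : ∀ v w, hL v * hL w = hL (v * w) := by
    intro v w
    rw [hLapp, hLapp, hLapp]
    calc U * Matrix.diagonal v * star U * (U * Matrix.diagonal w * star U)
        = U * (Matrix.diagonal v * ((star U * U) * (Matrix.diagonal w * star U))) := by
          simp only [Matrix.mul_assoc]
      _ = U * (Matrix.diagonal v * Matrix.diagonal w) * star U := by
          rw [hU2, Matrix.one_mul, Matrix.mul_assoc, Matrix.mul_assoc]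
      _ = U * Matrix.diagonal (fun i => v i * w i) * star U := by
          rw [Matrix.diagonal_mul_diagonal]
      _ = U * Matrix.diagonal (v * w) * star U := rfl
  have hpow : ∀ (v : Fin N → ℝ) (k : ℕ), hL v ^ k = hL (v ^ k) := by
    intro v k
    induction k with
    | zero => simpa using hL1.symm
    | succ k ih => rw [pow_succ, pow_succ, ih, hmul]
  have hspec : W = hL lam := by
    have := hW.spectral_theorem
    simpa [hLapp] using this
  set μ : Fin N → ℝ := fun i => 1 + σ ^ 2 * (1 - lam i) with hμdef
  have hμpos : ∀ i, 0 < μ i := by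
    intro i
    have h1 := (abs_le.mp (heig i)).2
    have h2 : 0 ≤ 1 - lam i := by linarith
    simp only [hμdef]
    nlinarith [sq_nonneg σ]
  have hμne : ∀ i, μ i ≠ 0 := fun i => (hμpos i).ne'
  set M : Matrix (Fin N) (Fin N) ℝ :=
    (1 : Matrix (Fin N) (Fin N) ℝ) + σ ^ 2 • ((1 : Matrix (Fin N) (Fin N) ℝ) - W) with hMdef
  have hM : M = hL μ := by
    have : μ = (1 : Fin N → ℝ) + σ ^ 2 • ((1 : Fin N → ℝ) - lam) := by
      funext i; simp [hμdef, smul_eq_mul]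
    rw [hMdef, this, map_add, map_smul, map_sub, hL1, ← hspec]
  have hμinv1 : μ * μ⁻¹ = (1 : Fin N → ℝ) := by
    funext i; exact mul_inv_cancel₀ (hμne i)
  have hμinv2 : μ⁻¹ * μ = (1 : Fin N → ℝ) := by
    funext i; exact inv_mul_cancel₀ (hμne i)
  have hMr : M * hL μ⁻¹ = 1 := by rw [hM, hmul, hμinv1, hL1]
  have hMl : hL μ⁻¹ * M = 1 := by rw [hM, hmul, hμinv2, hL1]
  have hMunit : IsUnit M := isUnit_iff_exists.mpr ⟨hL μ⁻¹, hMr, hMl⟩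
  have hMinv : M⁻¹ = hL μ⁻¹ := Matrix.inv_eq_right_inv hMr
  -- coefficients
  set c : ℕ → ℝ := fun k => ((d + k - 1).choose k : ℝ) * t ^ k with hc
  have hchoose : ∀ k : ℕ, (d + k - 1).choose k = (k + (d - 1)).choose (d - 1) := by
    intro k
    rw [show d + k - 1 = k + (d - 1) by omega, Nat.choose_symm_add]
  have hcnonneg : ∀ k, 0 ≤ c k := by
    intro k; positivity
  have hcsum : Summable c := by
    have h := summable_choose_mul_geometric_of_norm_lt_one (R := ℝ) (d - 1)
      (r := t) (by rwa [Real.norm_eq_abs, abs_of_nonneg ht0])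
    refine h.congr fun k => ?_
    rw [hc]; simp only [hchoose k]
  -- scalar sums
  have hscal : ∀ x : ℝ, |x| ≤ 1 →
      HasSum (fun k => c k * x ^ k) ((1 - t * x)⁻¹ ^ d) := by
    intro x hx
    have hr : ‖t * x‖ < 1 := by
      rw [Real.norm_eq_abs, abs_mul, abs_of_nonneg ht0]
      calc t * |x| ≤ t * 1 := by nlinarith
        _ < 1 := by linarith
    have h := hasSum_choose_mul_geometric_of_norm_lt_one (𝕜 := ℝ) (d - 1) hr
    have hd1 : d - 1 + 1 = d := by omega
    rw [hd1] at h
    have : (1 / (1 - t * x) ^ d) = (1 - t * x)⁻¹ ^ d := by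
      rw [one_div, inv_pow]
    rw [this] at h
    refine h.congr_fun fun k => ?_
    rw [hc]; simp only [hchoose k, mul_pow, mul_assoc]
  -- the vector-valued sum
  set s : Fin N → ℝ := fun i => (1 - t * lam i)⁻¹ ^ d with hs
  have hvec : HasSum (fun k => fun i => c k * lam i ^ k) s :=
    Pi.hasSum.mpr fun i => hscal (lam i) (heig i)
  let hC : (Fin N → ℝ) →L[ℝ] Matrix (Fin N) (Fin N) ℝ := LinearMap.toContinuousLinearMap hL
  letI : Norm ((Fin N → ℝ) →L[ℝ] Matrix (Fin N) (Fin N) ℝ) :=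
    ContinuousLinearMap.hasOpNorm (E := Fin N → ℝ) (F := Matrix (Fin N) (Fin N) ℝ)
  have hCapp : ∀ v, hC v = hL v := fun v => rfl
  have hWk : ∀ k : ℕ, W ^ k = hL (fun i => lam i ^ k) := by
    intro k
    rw [hspec, hpow]
    rfl
  have hterm : ∀ k : ℕ, c k • W ^ k = hC (fun i => c k * lam i ^ k) := by
    intro k
    rw [hWk, hCapp, show (fun i => c k * lam i ^ k) = c k • (fun i => lam i ^ k) from rfl,
      map_smul]
  have hmatsum : HasSum (fun k : ℕ => c k • W ^ k) (hC s) := by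
    have := hvec.mapL hC
    refine this.congr_fun fun k => hterm k
  -- summability in norm
  have hnormsum : Summable (fun k : ℕ => ‖c k • W ^ k‖) := by
    refine Summable.of_nonneg_of_le (fun k => norm_nonneg _)
      (fun k => ?_) (hcsum.mul_right ‖hC‖)
    rw [norm_smul, Real.norm_eq_abs, abs_of_nonneg (hcnonneg k)]
    have h1 : ‖W ^ k‖ ≤ ‖hC‖ := by
      rw [hWk k, ← hCapp]
      calc ‖hC (fun i => lam i ^ k)‖ ≤ ‖hC‖ * ‖(fun i => lam i ^ k)‖ := hC.le_opNorm _
        _ ≤ ‖hC‖ * 1 := by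
            refine mul_le_mul_of_nonneg_left ?_ hC.opNorm_nonneg
            refine (pi_norm_le_iff_of_nonneg zero_le_one).mpr fun i => ?_
            rw [Real.norm_eq_abs, abs_pow]
            exact pow_le_one₀ (abs_nonneg _) (heig i)
        _ = ‖hC‖ := mul_one _
    calc c k * ‖W ^ k‖ ≤ c k * ‖hC‖ := by nlinarith [hcnonneg k, norm_nonneg (W ^ k)]
      _ = c k * ‖hC‖ := rfl
  refine ⟨hMunit, hnormsum, ?_⟩
  rw [hMinv, hpow,
    show (∑' k : ℕ, (((d + k - 1).choose k : ℝ) * t ^ k) • W ^ k) = hC s from hmatsum.tsum_eq,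
    hCapp, ← map_smul]
  congr 1
  funext i
  have h1 : 1 - t * lam i = μ i / (1 + σ ^ 2) := by
    rw [ht]
    simp only [hμdef]
    field_simp
    ring
  simp only [Pi.smul_apply, Pi.pow_apply, Pi.inv_apply, smul_eq_mul, hs]
  rw [h1, inv_div, div_pow, div_eq_mul_inv, ← mul_assoc, inv_pow,
    inv_mul_cancel₀ (by positivity : ((1:ℝ) + σ ^ 2) ^ d ≠ 0), one_mul, ← inv_pow]
end

section
/- Let A be an N × N complex matrix. Define cos(M) := (exp(i·M) + exp(−i·M))/2 for a square complex matrix M, where exp is the matrix exponential and i the imaginary unit. Then cos((π/4)·(I − A)) = (1/√2) · ∑'_{k} ((−1)^{⌊k/2⌋}·(π/4)^k / k!) • A^k, where ⌊k/2⌋ is the floor of k/2 (so the sign factor is (−1)^{k/2} for even k and (−1)^{(k−1)/2} for odd k), and the series converges absolutely. -/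
attribute [local instance] Matrix.linftyOpNormedRing

/-- The matrix exponential `exp M = ∑_{k≥0} M^k / k!` for complex matrices. -/
noncomputable def matrixExpC {N : ℕ} (M : Matrix (Fin N) (Fin N) ℂ) :
    Matrix (Fin N) (Fin N) ℂ :=
  ∑' k : ℕ, ((k.factorial : ℂ))⁻¹ • M ^ k

/-- The matrix cosine `cos M = (exp(iM) + exp(-iM)) / 2`. -/
noncomputable def matrixCos {N : ℕ} (M : Matrix (Fin N) (Fin N) ℂ) :
    Matrix (Fin N) (Fin N) ℂ :=
  ((2 : ℂ))⁻¹ • (matrixExpC (Complex.I • M) + matrixExpC (-(Complex.I • M)))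

lemma exp_I_pi_div_four :
    Complex.exp (Complex.I * ((Real.pi : ℂ)/4)) = ((Real.sqrt 2 : ℂ)/2) * (1 + Complex.I) := by
  have h : Complex.I * ((Real.pi : ℂ)/4) = ((Real.pi/4 : ℝ) : ℂ) * Complex.I := by push_cast; ring
  rw [h, Complex.exp_mul_I, ← Complex.ofReal_cos, ← Complex.ofReal_sin,
    Real.cos_pi_div_four, Real.sin_pi_div_four]
  push_cast; ring

lemma exp_neg_I_pi_div_four :
    Complex.exp (-(Complex.I * ((Real.pi : ℂ)/4))) = ((Real.sqrt 2 : ℂ)/2) * (1 - Complex.I) := by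
  have h : -(Complex.I * ((Real.pi : ℂ)/4)) = ((-(Real.pi/4) : ℝ) : ℂ) * Complex.I := by
    push_cast; ring
  rw [h, Complex.exp_mul_I, ← Complex.ofReal_cos, ← Complex.ofReal_sin, Real.cos_neg, Real.sin_neg,
    Real.cos_pi_div_four, Real.sin_pi_div_four]
  push_cast; ring

lemma key (k : ℕ) :
    Complex.exp (Complex.I * ((Real.pi : ℂ)/4)) * (-Complex.I)^k
      + Complex.exp (-(Complex.I * ((Real.pi : ℂ)/4))) * Complex.I^k
    = (Real.sqrt 2 : ℂ) * (-1)^(k/2) := by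
  induction k using Nat.strong_induction_on with
  | _ k ih =>
    rw [exp_I_pi_div_four, exp_neg_I_pi_div_four]
    set s : ℂ := (Real.sqrt 2 : ℂ)
    match k with
    | 0 => push_cast; ring
    | 1 => linear_combination (-s) * Complex.I_sq
    | 2 => linear_combination s * Complex.I_sq
    | 3 => linear_combination (-s * (Complex.I^2 - 1)) * Complex.I_sq
    | (m+4) =>
      have h := ih m (by omega)
      rw [exp_I_pi_div_four, exp_neg_I_pi_div_four] at h
      have h4 : (m+4)/2 = m/2 + 2 := by omega
      rw [h4, pow_add, pow_add, pow_add]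
      have hI4 : (Complex.I:ℂ)^4 = 1 := by
        rw [show (4:ℕ) = 2*2 from rfl, pow_mul, Complex.I_sq]; norm_num
      have hnI4 : (-Complex.I:ℂ)^4 = 1 := by rw [neg_pow, hI4]; norm_num
      rw [hI4, hnI4]
      linear_combination h

attribute [local instance] Matrix.linftyOpNormedAlgebra

lemma matrixExpC_eq {N : ℕ} (M : Matrix (Fin N) (Fin N) ℂ) :
    matrixExpC M = NormedSpace.exp M := by
  rw [NormedSpace.exp_eq_tsum ℂ]; rfl

/-- Taylor expansion of the inverse cosine kernel: for any square complex matrix `A`,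
`cos((π/4)(I - A)) = (1/√2) ∑'_k ((-1)^⌊k/2⌋ (π/4)^k / k!) • A^k`, the series
converging absolutely. -/
theorem inverse_cosine_kernel_taylor_expansion
    {N : ℕ} (A : Matrix (Fin N) (Fin N) ℂ) :
    Summable (fun k : ℕ =>
        ‖((-1 : ℂ) ^ (k / 2) * ((Real.pi : ℂ) / 4) ^ k / (k.factorial : ℂ)) • A ^ k‖) ∧
      matrixCos (((Real.pi : ℂ) / 4) • ((1 : Matrix (Fin N) (Fin N) ℂ) - A))
        = ((Real.sqrt 2 : ℂ))⁻¹ •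
            ∑' k : ℕ,
              ((-1 : ℂ) ^ (k / 2) * ((Real.pi : ℂ) / 4) ^ k / (k.factorial : ℂ)) • A ^ k := by
  set c : ℂ := (Real.pi : ℂ)/4 with hc
  have hsummable : Summable (fun k : ℕ =>
      ‖((-1 : ℂ) ^ (k / 2) * c ^ k / (k.factorial : ℂ)) • A ^ k‖) := by
    have h := NormedSpace.norm_expSeries_summable' (𝕂 := ℂ) (c • A)
    refine h.congr fun k => ?_
    rw [smul_pow, smul_smul, norm_smul, norm_smul]
    congr 1
    simp [norm_mul, norm_div, norm_pow, norm_inv]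
    ring
  refine ⟨hsummable, ?_⟩
  -- HasSum for e • exp(b • A)
  have H : ∀ (e b : ℂ), HasSum (fun k : ℕ => (e * (b^k * ((k.factorial : ℂ))⁻¹)) • A ^ k)
      (e • NormedSpace.exp (b • A)) := by
    intro e b
    rw [NormedSpace.exp_eq_tsum ℂ]
    refine (((NormedSpace.expSeries_summable' (𝕂 := ℂ) (b • A)).hasSum).const_smul e).congr_fun
      fun k => ?_
    rw [smul_pow, smul_smul, smul_smul]
    ring_nf
  -- rewrite the argument of each exponential
  have harg1 : Complex.I • (c • ((1 : Matrix (Fin N) (Fin N) ℂ) - A))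
      = algebraMap ℂ (Matrix (Fin N) (Fin N) ℂ) (Complex.I * c) + (-(Complex.I * c)) • A := by
    rw [Algebra.algebraMap_eq_smul_one]
    module
  have harg2 : -(Complex.I • (c • ((1 : Matrix (Fin N) (Fin N) ℂ) - A)))
      = algebraMap ℂ (Matrix (Fin N) (Fin N) ℂ) (-(Complex.I * c)) + (Complex.I * c) • A := by
    rw [Algebra.algebraMap_eq_smul_one]
    module
  have hexp : ∀ z : ℂ, NormedSpace.exp
      (algebraMap ℂ (Matrix (Fin N) (Fin N) ℂ) z + (-z) • A)
      = Complex.exp z • NormedSpace.exp ((-z) • A) := by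
    intro z
    have h1 : NormedSpace.exp (algebraMap ℂ (Matrix (Fin N) (Fin N) ℂ) z)
        = algebraMap ℂ (Matrix (Fin N) (Fin N) ℂ) (NormedSpace.exp z) :=
      (NormedSpace.algebraMap_exp_comm z).symm
    rw [Matrix.exp_add_of_commute _ _ (Algebra.commute_algebraMap_left z _),
      h1, ← Complex.exp_eq_exp_ℂ,
      Algebra.algebraMap_eq_smul_one, smul_mul_assoc, one_mul]
  -- LHS
  have hLHS : matrixCos (c • ((1 : Matrix (Fin N) (Fin N) ℂ) - A))
      = (((2:ℂ))⁻¹ * Complex.exp (Complex.I * c)) • NormedSpace.exp ((-(Complex.I * c)) • A)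
        + (((2:ℂ))⁻¹ * Complex.exp (-(Complex.I * c))) • NormedSpace.exp ((Complex.I * c) • A) := by
    rw [matrixCos, matrixExpC_eq, matrixExpC_eq, harg2, harg1, hexp (Complex.I * c)]
    have := hexp (-(Complex.I * c))
    rw [neg_neg] at this
    rw [this, smul_add, smul_smul, smul_smul]
  rw [hLHS]
  -- combined HasSum
  have hcomb := (H (((2:ℂ))⁻¹ * Complex.exp (Complex.I * c)) (-(Complex.I * c))).add
    (H (((2:ℂ))⁻¹ * Complex.exp (-(Complex.I * c))) (Complex.I * c))
  -- RHS HasSum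
  have hRHS : HasSum (fun k : ℕ =>
      (((Real.sqrt 2 : ℂ))⁻¹ * ((-1 : ℂ) ^ (k / 2) * c ^ k / (k.factorial : ℂ))) • A ^ k)
      (((Real.sqrt 2 : ℂ))⁻¹ •
        ∑' k : ℕ, ((-1 : ℂ) ^ (k / 2) * c ^ k / (k.factorial : ℂ)) • A ^ k) := by
    have h := (hsummable.of_norm).hasSum.const_smul (((Real.sqrt 2 : ℂ))⁻¹)
    refine h.congr_fun fun k => ?_
    rw [smul_smul]
  -- termwise equality
  have hs2 : (Real.sqrt 2 : ℂ) * (Real.sqrt 2 : ℂ) = 2 := by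
    rw [← Complex.ofReal_mul, Real.mul_self_sqrt (by norm_num)]
    norm_num
  have hs2ne : (Real.sqrt 2 : ℂ) ≠ 0 := by
    intro h
    rw [h] at hs2; simp at hs2
  have hterm : ∀ k : ℕ,
      ((((2:ℂ))⁻¹ * Complex.exp (Complex.I * c)) * ((-(Complex.I * c))^k * ((k.factorial : ℂ))⁻¹)) • A ^ k
      + ((((2:ℂ))⁻¹ * Complex.exp (-(Complex.I * c))) * ((Complex.I * c)^k * ((k.factorial : ℂ))⁻¹)) • A ^ k
      = (((Real.sqrt 2 : ℂ))⁻¹ * ((-1 : ℂ) ^ (k / 2) * c ^ k / (k.factorial : ℂ))) • A ^ k := by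
    intro k
    rw [← add_smul]
    congr 1
    have hk : (-(Complex.I * c))^k = (-Complex.I)^k * c^k := by
      rw [← neg_mul, mul_pow]
    have hk2 : (Complex.I * c)^k = Complex.I^k * c^k := by rw [mul_pow]
    rw [hk, hk2]
    have hkey := key k
    rw [← hc] at hkey
    have hinv : ((Real.sqrt 2 : ℂ))⁻¹ = (Real.sqrt 2 : ℂ)/2 := by
      rw [eq_div_iff (two_ne_zero)]
      rw [inv_mul_eq_iff_eq_mul₀ hs2ne]
      linear_combination -hs2
    rw [hinv]
    linear_combination (((2:ℂ))⁻¹ * c^k * ((k.factorial : ℂ))⁻¹) * hkey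
  have := hRHS.congr_fun hterm
  exact hcomb.unique this
end
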